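/- arXiv:2407.18615 — 3 statements merged into one kernel-verified Lean document; each statement's English description precedes it below -/
import Mathlib

section
/- Let n ≥ 2 point masses m_1,…,m_n > 0 be placed at positions q_i = (x_i, y_i) ∈ ℝ², and for each pair i < j let v_{i,j} ∈ ℝ^{2n} be the twist vector whose only nonzero components are (v_{i,j})_{x_i} = m_j(y_i − y_j), (v_{i,j})_{y_i} = −m_j(x_i − x_j), (v_{i,j})_{x_j} = −m_i(y_i − y_j), (v_{i,j})_{y_j} = m_i(x_i − x_j). If the n points are not all collinear, then the dimension of the linear span of the set of all twist vectors {v_{i,j} : 1 ≤ i < j ≤ n} is exactly 2n − 3. -/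
noncomputable section

open Finset

/-- A point in the Euclidean plane with the given coordinates. -/
def pt (a b : ℝ) : EuclideanSpace ℝ (Fin 2) := (WithLp.equiv 2 (Fin 2 → ℝ)).symm ![a, b]

/-- The configuration space of `n` planar points, identified with `ℝ^{2n}`. -/
abbrev Conf (n : ℕ) := Fin n → EuclideanSpace ℝ (Fin 2)

/-- The twist vector `v_{i,j}`: its only nonzero components are
`(v_{i,j})_{x_i} = m_j (y_i - y_j)`, `(v_{i,j})_{y_i} = -m_j (x_i - x_j)`,
`(v_{i,j})_{x_j} = -m_i (y_i - y_j)`, `(v_{i,j})_{y_j} = m_i (x_i - x_j)`. -/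
def twist {n : ℕ} (m : Fin n → ℝ) (q : Conf n) (i j : Fin n) : Conf n :=
  fun k =>
    if k = i then pt (m j * (q i 1 - q j 1)) (-(m j * (q i 0 - q j 0)))
    else if k = j then pt (-(m i * (q i 1 - q j 1))) (m i * (q i 0 - q j 0))
    else 0

/-- The dot product on the configuration space `ℝ^{2n}`. -/
def dot {n : ℕ} (v w : Conf n) : ℝ := ∑ k, ∑ t, v k t * w k t

/-- Twice the signed area `Λ_{i,j,k}` of the triangle `q_i q_j q_k`. -/
def lam {n : ℕ} (q : Conf n) (i j k : Fin n) : ℝ :=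
  (q i 0 - q j 0) * (q i 1 - q k 1) - (q i 0 - q k 0) * (q i 1 - q j 1)

/-- The moment of inertia about the center of mass. -/
def Ifun {n : ℕ} (m : Fin n → ℝ) (q : Conf n) : ℝ :=
  ∑ i, m i * ‖q i - (∑ i, m i)⁻¹ • ∑ j, m j • q j‖ ^ 2

/-- The homogeneous potential `U = ∑_{i<j} m_i m_j r_{i,j}^{2-A}`. -/
def Ufun {n : ℕ} (A : ℝ) (m : Fin n → ℝ) (q : Conf n) : ℝ :=
  ∑ p ∈ Finset.univ.filter (fun p : Fin n × Fin n => p.1 < p.2),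
    m p.1 * m p.2 * ‖q p.1 - q p.2‖ ^ (2 - A)

/-- `f = M I / 2 + U / (A - 2)`. -/
def fFun {n : ℕ} (A : ℝ) (m : Fin n → ℝ) (q : Conf n) : ℝ :=
  (∑ i, m i) * Ifun m q / 2 + Ufun A m q / (A - 2)

/-- The Hessian of `f` at `q`, as a bilinear form: `v ᵀ H w`. -/
def hess {n : ℕ} (A : ℝ) (m : Fin n → ℝ) (q : Conf n) (v w : Conf n) : ℝ :=
  fderiv ℝ (fderiv ℝ (fFun A m)) q v w

/-!
Twists rotate a pair of points about its center of mass, so to first order they preserve the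
center of mass and `∑ mₖ |qₖ|²`. Hence they lie in the kernel of a linear map `ℝ^{2n} → ℝ² × ℝ`
which is onto as soon as two points differ, and the dimension is at most `2n - 3`.

Conversely, fix a non-degenerate triangle `q_a q_b q_c`. Every other point `q_k` forms a
non-degenerate triangle with two of its vertices `q_p, q_r`; then `v_{p,k}, v_{r,k}` move `q_k` in
independent directions while all other chosen twists fix it. Together with three twists of the
triangle this gives `3 + 2 (n - 3)` independent twists.
-/

open scoped RealInnerProductSpace

local notation "ℝ²" => EuclideanSpace ℝ (Fin 2)

theorem LinearIndependent.sumElim_of_comp {R M N ι₁ ι₂ : Type*} [Ring R] [AddCommGroup M]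
    [Module R M] [AddCommGroup N] [Module R N] {f : ι₁ → M} {g : ι₂ → M} (π : M →ₗ[R] N)
    (hf : LinearIndependent R f) (hπf : ∀ i, π (f i) = 0) (hg : LinearIndependent R (π ∘ g)) :
    LinearIndependent R (Sum.elim f g) :=
  LinearIndependent.sumElim_of_quotient (M' := LinearMap.ker π) (f := fun i => ⟨f i, hπf i⟩)
    (.of_comp (LinearMap.ker π).subtype hf) g (.of_comp ((LinearMap.ker π).liftQ π le_rfl) hg)

@[simp] lemma pt_apply_zero (a b : ℝ) : pt a b 0 = a := rfl
@[simp] lemma pt_apply_one (a b : ℝ) : pt a b 1 = b := rfl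

def cross (u v : ℝ²) : ℝ := u 0 * v 1 - u 1 * v 0

lemma linearIndependent_pair_of_cross_ne_zero {u v : ℝ²} (h : cross u v ≠ 0) :
    LinearIndependent ℝ ![u, v] := by
  refine LinearIndependent.pair_iff.2 fun s t hst => ?_
  have h0 : s * u 0 + t * v 0 = 0 := by simpa using congrArg (· 0) hst
  have h1 : s * u 1 + t * v 1 = 0 := by simpa using congrArg (· 1) hst
  unfold cross at h
  constructor
  · exact (mul_eq_zero.1 (by linear_combination v 1 * h0 - v 0 * h1 : s * _ = 0)).resolve_right h
  · exact (mul_eq_zero.1 (by linear_combination u 0 * h1 - u 1 * h0 : t * _ = 0)).resolve_right h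

lemma exists_eq_smul_of_cross_eq_zero {u w : ℝ²} (hu : u ≠ 0) (h : cross u w = 0) :
    ∃ r : ℝ, w = r • u := by
  have hnorm : u 0 ^ 2 + u 1 ^ 2 ≠ 0 := by
    contrapose! hu
    ext t
    fin_cases t <;> simp <;> nlinarith [sq_nonneg (u 0), sq_nonneg (u 1)]
  refine ⟨(u 0 * w 0 + u 1 * w 1) / (u 0 ^ 2 + u 1 ^ 2), ?_⟩
  unfold cross at h
  ext t
  fin_cases t
  · simp only [Fin.zero_eta, PiLp.smul_apply, smul_eq_mul]
    field_simp
    linear_combination -u 1 * h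
  · simp only [Fin.mk_one, PiLp.smul_apply, smul_eq_mul]
    field_simp
    linear_combination u 0 * h

def rotCW : ℝ² →ₗ[ℝ] ℝ² where
  toFun x := pt (x 1) (-x 0)
  map_add' x y := by ext t; fin_cases t <;> simp [add_comm]
  map_smul' c x := by ext t; fin_cases t <;> simp

@[simp] lemma rotCW_apply_zero (x : ℝ²) : rotCW x 0 = x 1 := rfl
@[simp] lemma rotCW_apply_one (x : ℝ²) : rotCW x 1 = -x 0 := rfl

lemma inner_rotCW_self (x : ℝ²) : ⟪x, rotCW x⟫ = 0 := by
  simp only [PiLp.inner_apply, Fin.sum_univ_two, rotCW_apply_zero, rotCW_apply_one,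
    RCLike.inner_apply, conj_trivial]
  ring

section TwistSpan

variable {n : ℕ} (m : Fin n → ℝ) (q : Conf n)

lemma lam_eq_cross (i j k : Fin n) : lam q i j k = cross (q j - q i) (q k - q i) := by
  simp only [lam, cross, PiLp.sub_apply]; ring

lemma ne_of_lam_ne_zero {i j k : Fin n} (h : lam q i j k ≠ 0) :
    q i ≠ q j ∧ q i ≠ q k ∧ q j ≠ q k := by
  refine ⟨?_, ?_, ?_⟩ <;> intro he <;> apply h <;> simp [lam, he]

lemma lam_rotate (i j k : Fin n) : lam q j k i = lam q i j k := by
  unfold lam; ring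

lemma twist_apply_of_ne {i j k : Fin n} (hi : k ≠ i) (hj : k ≠ j) : twist m q i j k = 0 := by
  simp [twist, hi, hj]

lemma twist_eq_single_sub_single (i j : Fin n) :
    twist m q i j =
      Pi.single i (m j • rotCW (q i - q j)) - Pi.single j (m i • rotCW (q i - q j)) := by
  ext k t
  by_cases hi : k = i <;> by_cases hj : k = j <;> subst_vars <;> fin_cases t <;> simp [twist, *] <;>
    ring

lemma twist_comm (i j : Fin n) : twist m q i j = twist m q j i := by
  rw [twist_eq_single_sub_single, twist_eq_single_sub_single, ← neg_sub (q i), map_neg]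
  simp only [smul_neg, Pi.single_neg]
  abel

lemma twist_apply_right {i j : Fin n} (h : i ≠ j) :
    twist m q i j j = -(m i • rotCW (q i - q j)) := by
  simp [twist_eq_single_sub_single, h.symm]

lemma cross_twist_apply_self {p r k : Fin n} (hp : p ≠ k) (hr : r ≠ k) :
    cross (twist m q p k k) (twist m q r k k) = m p * m r * lam q k p r := by
  rw [twist_apply_right m q hp, twist_apply_right m q hr, lam_eq_cross]
  simp only [cross, PiLp.neg_apply, PiLp.smul_apply, rotCW_apply_zero, rotCW_apply_one,
    smul_eq_mul, PiLp.sub_apply]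
  ring

lemma linearIndependent_twist_apply_self (hm : ∀ i, m i ≠ 0) {p r k : Fin n}
    (h : lam q k p r ≠ 0) :
    LinearIndependent ℝ ![twist m q p k k, twist m q r k k] := by
  obtain ⟨hkp, hkr, -⟩ := ne_of_lam_ne_zero q h
  apply linearIndependent_pair_of_cross_ne_zero
  rw [cross_twist_apply_self m q (ne_of_apply_ne q hkp).symm (ne_of_apply_ne q hkr).symm]
  exact mul_ne_zero (mul_ne_zero (hm p) (hm r)) h

lemma exists_lam_ne_zero_of_not_collinear (hq : ¬ Collinear ℝ (Set.range q)) :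
    ∃ a b c, lam q a b c ≠ 0 := by
  obtain ⟨i, j, hij⟩ : ∃ i j, q i ≠ q j := by
    by_contra! h
    apply hq
    rcases (Set.range q).eq_empty_or_nonempty with he | ⟨_, i, rfl⟩
    · rw [he]; exact collinear_empty ℝ _
    · exact (collinear_singleton ℝ (q i)).subset (by rintro _ ⟨j, rfl⟩; exact h j i)
  by_contra! hlam
  apply hq
  rw [collinear_iff_of_mem (Set.mem_range_self i)]
  refine ⟨q j - q i, ?_⟩
  rintro _ ⟨k, rfl⟩
  obtain ⟨r, hr⟩ := exists_eq_smul_of_cross_eq_zero (sub_ne_zero.2 hij.symm)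
    ((lam_eq_cross q i j k).symm.trans (hlam i j k))
  exact ⟨r, by rw [vadd_eq_add, ← hr, sub_add_cancel]⟩

-- `Λ_{abc} = Λ_{kbc} - Λ_{kac} + Λ_{kab}`: the signed areas of the three triangles at `q_k` add up.
lemma exists_lam_ne_zero_of_lam_ne_zero {a b c : Fin n} (h : lam q a b c ≠ 0) (k : Fin n) :
    ∃ p ∈ ({a, b, c} : Finset (Fin n)), ∃ r ∈ ({a, b, c} : Finset (Fin n)), lam q k p r ≠ 0 := by
  by_contra! hk
  apply h
  have hab := hk a (by simp) b (by simp)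
  have hac := hk a (by simp) c (by simp)
  have hbc := hk b (by simp) c (by simp)
  unfold lam at *
  linear_combination hab - hac + hbc

def twistSpan : Submodule ℝ (Conf n) :=
  Submodule.span ℝ {v : Conf n | ∃ i j : Fin n, i < j ∧ v = twist m q i j}

lemma twist_mem_twistSpan {i j : Fin n} (h : i ≠ j) : twist m q i j ∈ twistSpan m q := by
  rcases h.lt_or_gt with h | h
  · exact Submodule.subset_span ⟨i, j, h, rfl⟩
  · rw [twist_comm]
    exact Submodule.subset_span ⟨j, i, h, rfl⟩

/-- The first-order change of `M • (center of mass)` and of `½ ∑ mₖ |qₖ|²` along `v`. -/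
def massMoments : Conf n →ₗ[ℝ] ℝ² × ℝ :=
  (∑ k, m k • LinearMap.proj k).prod (∑ k, m k • innerₗ ℝ² (q k) ∘ₗ LinearMap.proj k)

lemma massMoments_single (i : Fin n) (x : ℝ²) :
    massMoments m q (Pi.single i x) = (m i • x, m i * ⟪q i, x⟫) := by
  simp [massMoments, Pi.single_apply, apply_ite]

lemma massMoments_twist (i j : Fin n) : massMoments m q (twist m q i j) = 0 := by
  have h := inner_rotCW_self (q i - q j)
  rw [inner_sub_left] at h
  rw [twist_eq_single_sub_single, map_sub, massMoments_single, massMoments_single]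
  ext
  · simp [smul_smul, mul_comm]
  · simp only [inner_smul_right, Prod.snd_sub, Prod.snd_zero]
    linear_combination m i * m j * h

lemma massMoments_surjective (hm : ∀ i, m i ≠ 0) {i j : Fin n} (hij : q i ≠ q j) :
    Function.Surjective (massMoments m q) := by
  rintro ⟨x, γ⟩
  have hd : ‖q i - q j‖ ≠ 0 := norm_ne_zero_iff.2 (sub_ne_zero.2 hij)
  refine ⟨Pi.single i ((m i)⁻¹ • x) + ((γ - ⟪q i, x⟫) / ‖q i - q j‖ ^ 2) •
    (Pi.single i ((m i)⁻¹ • (q i - q j)) - Pi.single j ((m j)⁻¹ • (q i - q j))), ?_⟩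
  simp only [map_add, map_smul, map_sub, massMoments_single, smul_smul, mul_inv_cancel₀ (hm _),
    one_smul, inner_smul_right, ← mul_assoc, one_mul, sub_self, Prod.smul_mk, smul_zero,
    Prod.mk_sub_mk, Prod.mk_add_mk, add_zero, ← inner_sub_left, real_inner_self_eq_norm_sq,
    smul_eq_mul]
  field_simp
  simp

lemma finrank_ker_massMoments (hm : ∀ i, m i ≠ 0) {i j : Fin n} (hij : q i ≠ q j) :
    Module.finrank ℝ (LinearMap.ker (massMoments m q)) = 2 * n - 3 := by
  have h := LinearMap.finrank_range_add_finrank_ker (massMoments m q)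
  rw [LinearMap.range_eq_top.2 (massMoments_surjective m q hm hij), finrank_top] at h
  simp [Module.finrank_pi_fintype] at h
  omega

lemma finrank_twistSpan_le (hm : ∀ i, m i ≠ 0) {i j : Fin n} (hij : q i ≠ q j) :
    Module.finrank ℝ (twistSpan m q) ≤ 2 * n - 3 := by
  rw [← finrank_ker_massMoments m q hm hij]
  refine Submodule.finrank_mono (Submodule.span_le.2 ?_)
  rintro _ ⟨i, j, -, rfl⟩
  exact massMoments_twist m q i j

lemma linearIndependent_triangle_twists (hm : ∀ i, m i ≠ 0) {a b c : Fin n}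
    (h : lam q a b c ≠ 0) :
    LinearIndependent ℝ (Sum.elim ![twist m q b c] ![twist m q b a, twist m q c a]) := by
  obtain ⟨hab, hac, -⟩ := ne_of_lam_ne_zero q h
  refine .sumElim_of_comp (LinearMap.proj a) ?_ ?_ ?_
  · have hcb : twist m q c b b ≠ 0 :=
      (linearIndependent_twist_apply_self m q hm (by rwa [lam_rotate])).ne_zero 0
    rw [linearIndependent_unique_iff, Matrix.cons_val_fin_one, twist_comm]
    exact fun h0 => hcb (by rw [h0, Pi.zero_apply])
  · intro i
    fin_cases i
    exact twist_apply_of_ne m q (ne_of_apply_ne q hab) (ne_of_apply_ne q hac)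
  · have hproj : LinearMap.proj (R := ℝ) a ∘ ![twist m q b a, twist m q c a] =
        ![twist m q b a a, twist m q c a a] := by
      ext s : 1
      fin_cases s <;> rfl
    rw [hproj]
    exact linearIndependent_twist_apply_self m q hm h

lemma linearIndependent_funLeft_twists (hm : ∀ i, m i ≠ 0) (s : Finset (Fin n))
    {p r : Fin n → Fin n} (hp : ∀ k, p k ∈ s) (hr : ∀ k, r k ∈ s)
    (hpr : ∀ k, lam q k (p k) (r k) ≠ 0) :
    LinearIndependent ℝ (LinearMap.funLeft ℝ ℝ² (Subtype.val : {k // k ∉ s} → Fin n) ∘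
      fun x : Σ _ : {k // k ∉ s}, Fin 2 => twist m q (![p x.1, r x.1] x.2) x.1) := by
  let B (k : {k // k ∉ s}) : Module.Basis (Fin 2) ℝ ℝ² :=
    basisOfLinearIndependentOfCardEqFinrank
      (linearIndependent_twist_apply_self m q hm (hpr k.1)) (by simp)
  suffices hB : LinearMap.funLeft ℝ ℝ² Subtype.val ∘
      (fun x : Σ _ : {k // k ∉ s}, Fin 2 => twist m q (![p x.1, r x.1] x.2) x.1) = Pi.basis B by
    rw [hB]
    exact (Pi.basis B).linearIndependent
  ext ⟨k, t⟩ k' : 2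
  rw [Function.comp_apply, LinearMap.funLeft_apply, Pi.basis_apply,
    coe_basisOfLinearIndependentOfCardEqFinrank]
  rcases eq_or_ne k' k with rfl | hk
  · fin_cases t <;> simp
  · have hk' : k'.1 ≠ ![p k, r k] t := by
      fin_cases t
      exacts [(ne_of_mem_of_not_mem (hp k) k'.2).symm, (ne_of_mem_of_not_mem (hr k) k'.2).symm]
    rw [Pi.single_eq_of_ne hk, twist_apply_of_ne m q hk' (Subtype.val_injective.ne hk)]

lemma le_finrank_twistSpan (hm : ∀ i, m i ≠ 0) {a b c : Fin n} (h : lam q a b c ≠ 0) :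
    2 * n - 3 ≤ Module.finrank ℝ (twistSpan m q) := by
  obtain ⟨hab, hac, hbc⟩ := ne_of_lam_ne_zero q h
  set s : Finset (Fin n) := {a, b, c}
  choose p hp r hr hpr using exists_lam_ne_zero_of_lam_ne_zero q h
  let F := Sum.elim (Sum.elim ![twist m q b c] ![twist m q b a, twist m q c a])
    fun x : Σ _ : {k // k ∉ s}, Fin 2 => twist m q (![p x.1, r x.1] x.2) x.1
  have hF : LinearIndependent ℝ F := by
    refine .sumElim_of_comp (LinearMap.funLeft ℝ ℝ² Subtype.val)
      (linearIndependent_triangle_twists m q hm h) ?_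
      (linearIndependent_funLeft_twists m q hm s hp hr hpr)
    rintro (i | i) <;> ext ⟨k, hk⟩ : 1 <;>
      simp only [s, Finset.mem_insert, Finset.mem_singleton, not_or] at hk <;> fin_cases i <;>
      simp [LinearMap.funLeft_apply, twist_apply_of_ne, hk]
  have hFmem : Set.range F ⊆ twistSpan m q := by
    rintro _ ⟨(i | i) | ⟨k, t⟩, rfl⟩
    · fin_cases i
      exact twist_mem_twistSpan m q (ne_of_apply_ne q hbc)
    · fin_cases i
      exacts [twist_mem_twistSpan m q (ne_of_apply_ne q hab.symm),
        twist_mem_twistSpan m q (ne_of_apply_ne q hac.symm)]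
    · obtain ⟨hkp, hkr, -⟩ := ne_of_lam_ne_zero q (hpr k)
      fin_cases t
      exacts [twist_mem_twistSpan m q (ne_of_apply_ne q hkp.symm),
        twist_mem_twistSpan m q (ne_of_apply_ne q hkr.symm)]
  have hs : #s = 3 := Finset.card_eq_three.2
    ⟨a, b, c, ne_of_apply_ne q hab, ne_of_apply_ne q hac, ne_of_apply_ne q hbc, rfl⟩
  have hn : 3 ≤ n := by simpa [hs] using card_le_univ s
  calc 2 * n - 3 = Fintype.card ((Fin 1 ⊕ Fin 2) ⊕ Σ _ : {k // k ∉ s}, Fin 2) := by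
        simp [Fintype.card_subtype_compl, hs]; omega
    _ = Module.finrank ℝ (Submodule.span ℝ (Set.range F)) := (finrank_span_eq_card hF).symm
    _ ≤ Module.finrank ℝ (twistSpan m q) := Submodule.finrank_mono (Submodule.span_le.2 hFmem)

end TwistSpan

theorem twist_span_dim_noncollinear_general (n : ℕ)
    (m : Fin n → ℝ) (hm : ∀ i, 0 < m i) (q : Conf n)
    (hq : ¬ Collinear ℝ (Set.range q)) :
    Module.finrank ℝ
      (Submodule.span ℝ {v : Conf n | ∃ i j : Fin n, i < j ∧ v = twist m q i j}) =
      2 * n - 3 := by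
  have hm' : ∀ i, m i ≠ 0 := fun i => (hm i).ne'
  obtain ⟨a, b, c, h⟩ := exists_lam_ne_zero_of_not_collinear q hq
  exact le_antisymm (finrank_twistSpan_le m q hm' (ne_of_lam_ne_zero q h).1)
    (le_finrank_twistSpan m q hm' h)

/-- If the `n ≥ 2` points (with positive masses) are not all collinear, the span of the
twist vectors `v_{i,j}` for `i < j` has dimension exactly `2n - 3`. -/
theorem twist_span_dim_noncollinear (n : ℕ) (hn : 2 ≤ n)
    (m : Fin n → ℝ) (hm : ∀ i, 0 < m i) (q : Conf n)
    (hq : ¬ Collinear ℝ (Set.range q)) :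
    Module.finrank ℝ
      (Submodule.span ℝ {v : Conf n | ∃ i j : Fin n, i < j ∧ v = twist m q i j}) =
      2 * n - 3 :=
  twist_span_dim_noncollinear_general n m hm q hq
end
end

section
/- Let A > 2 and let q_1, q_2, q_3 ∈ ℝ² be a scale-normalized planar central configuration of three distinct points with positive masses m_1, m_2, m_3 (i.e. Σ_{k ≠ i} m_k (q_i − q_k)(r_{i,k}^{−A} − 1) = 0 for each i, with r_{i,k} = |q_i − q_k|). If the three points are not collinear, then r_{1,2} = r_{1,3} = r_{2,3} = 1; that is, the only non-collinear three-body central configurations are the Lagrange equilateral triangles of unit side. -/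
noncomputable section

open Finset

lemma rpow_neg_eq_one_imp {A r : ℝ} (hA : 2 < A) (hr : 0 < r) (h : r ^ (-A) = 1) :
    r = 1 := by
  have hlog : (-A) * Real.log r = 0 := by
    rw [← Real.log_rpow hr, h, Real.log_one]
  have hA0 : (-A) ≠ 0 := by nlinarith
  have : Real.log r = 0 := by
    rcases mul_eq_zero.1 hlog with h' | h'
    · exact absurd h' hA0
    · exact h'
  rcases Real.log_eq_zero.1 this with h' | h' | h' <;> linarith

/-- A scale-normalized three-body central configuration (exponent `A > 2`, positive
masses) that is not collinear is an equilateral triangle with all sides of length 1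
(the Lagrange configuration). -/
theorem lagrange_equilateral (A : ℝ) (hA : 2 < A)
    (m : Fin 3 → ℝ) (hm : ∀ i, 0 < m i) (q : Conf 3)
    (hq : Function.Injective q)
    (hcc : ∀ i : Fin 3,
      ∑ k ∈ Finset.univ.erase i, (m k * (‖q i - q k‖ ^ (-A) - 1)) • (q i - q k) = 0)
    (hnc : ¬ Collinear ℝ (Set.range q)) :
    ‖q 0 - q 1‖ = 1 ∧ ‖q 0 - q 2‖ = 1 ∧ ‖q 1 - q 2‖ = 1 := by
  have h01 : q 0 ≠ q 1 := fun h => by simpa using hq h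
  have h02 : q 0 ≠ q 2 := fun h => by simpa using hq h
  have h12 : q 1 ≠ q 2 := fun h => by simpa using hq h
  -- linear independence of q0 - q1 and q0 - q2
  have li : ∀ c1 c2 : ℝ, c1 • (q 0 - q 1) + c2 • (q 0 - q 2) = 0 → c1 = 0 ∧ c2 = 0 := by
    intro c1 c2 h
    by_cases hc1 : c1 = 0
    · subst hc1
      refine ⟨rfl, ?_⟩
      simp only [zero_smul, zero_add] at h
      rcases smul_eq_zero.1 h with h' | h'
      · exact h'
      · exact absurd (sub_eq_zero.1 h') h02
    · exfalso
      apply hnc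
      have hmem : q 0 ∈ Set.range q := ⟨0, rfl⟩
      rw [collinear_iff_of_mem hmem]
      refine ⟨q 0 - q 2, ?_⟩
      have h' : c1 • (q 0 - q 1) = (-c2) • (q 0 - q 2) := by
        rw [neg_smul]; exact eq_neg_of_add_eq_zero_left h
      have heq : q 0 - q 1 = (-c2 / c1) • (q 0 - q 2) := by
        calc q 0 - q 1 = c1⁻¹ • (c1 • (q 0 - q 1)) := (inv_smul_smul₀ hc1 _).symm
          _ = c1⁻¹ • ((-c2) • (q 0 - q 2)) := by rw [h']
          _ = (-c2 / c1) • (q 0 - q 2) := by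
              rw [smul_smul]; congr 1; field_simp
      rintro p ⟨l, rfl⟩
      fin_cases l
      · exact ⟨0, by simp⟩
      · refine ⟨c2 / c1, ?_⟩
        have hx : q 1 = -((-c2 / c1) • (q 0 - q 2)) + q 0 := by
          rw [← heq]; abel
        show q 1 = (c2 / c1) • (q 0 - q 2) +ᵥ q 0
        rw [vadd_eq_add, hx, ← neg_smul, neg_div, neg_neg]
      · refine ⟨-1, ?_⟩
        show q 2 = (-1 : ℝ) • (q 0 - q 2) +ᵥ q 0
        rw [vadd_eq_add]; module
  have he0 : (Finset.univ.erase (0 : Fin 3)) = {1, 2} := by decide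
  have he1 : (Finset.univ.erase (1 : Fin 3)) = {0, 2} := by decide
  have e0 := hcc 0
  rw [he0, Finset.sum_insert (by decide), Finset.sum_singleton] at e0
  have e1 := hcc 1
  rw [he1, Finset.sum_insert (by decide), Finset.sum_singleton] at e1
  obtain ⟨z1, z2⟩ := li _ _ e0
  have e1' : (-(m 0 * (‖q 1 - q 0‖ ^ (-A) - 1)) - m 2 * (‖q 1 - q 2‖ ^ (-A) - 1))
      • (q 0 - q 1) + (m 2 * (‖q 1 - q 2‖ ^ (-A) - 1)) • (q 0 - q 2) = 0 := by
    rw [← e1]; module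
  obtain ⟨w1, w2⟩ := li _ _ e1'
  have hnorm : ∀ i j : Fin 3, q i ≠ q j → m j * (‖q i - q j‖ ^ (-A) - 1) = 0 →
      ‖q i - q j‖ = 1 := by
    intro i j hij hz
    have hmj := (hm j).ne'
    have : ‖q i - q j‖ ^ (-A) = 1 := by
      have := (mul_eq_zero.1 hz).resolve_left hmj
      linarith [sub_eq_zero.1 this]
    exact rpow_neg_eq_one_imp hA (norm_pos_iff.2 (sub_ne_zero.2 hij)) this
  exact ⟨hnorm 0 1 h01 z1, hnorm 0 2 h02 z2, hnorm 1 2 h12 w2⟩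
end
end

section
/- For any positive mass ratios μ_{i,j} = m_i/m_j (with m_1, m_2, m_3 > 0) and any A > 0, the symmetric 3×3 matrix (3A/4)·[[μ_{3,1} + μ_{3,2}, −1, −1], [−1, μ_{2,1} + μ_{2,3}, −1], [−1, −1, μ_{1,2} + μ_{1,3}]] has exactly one zero eigenvalue and two strictly positive eigenvalues. Consequently the Lagrange equilateral triangle central configurations are minima of f modulo the rotational symmetry. -/
noncomputable section

open Finset

/-!
Up to the factor `3A/4`, the quadratic form of the matrix is the sum of three squares
`(m₃x₁ - m₂x₂)²/(m₂m₃) + (m₃x₁ - m₁x₃)²/(m₁m₃) + (m₂x₂ - m₁x₃)²/(m₁m₂)`.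
So the matrix is positive semidefinite, and its kernel consists of the vectors on which all three
squares vanish: the line spanned by the rotation direction `(m₁m₂, m₁m₃, m₂m₃)`. For a Hermitian
matrix the number of zero eigenvalues is the dimension of the kernel, so exactly one eigenvalue
vanishes and the remaining two are positive.
-/

namespace Matrix

open scoped ComplexOrder

theorem mulVecLin_smul {m n R : Type*} [Fintype n] [CommSemiring R] (c : R) (M : Matrix m n R) :
    (c • M).mulVecLin = c • M.mulVecLin :=
  map_smul (mulVecBilin R R) c M

variable {n 𝕜 : Type*} [Fintype n] [DecidableEq n] [RCLike 𝕜]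

theorem IsHermitian.card_eigenvalues_eq_zero {A : Matrix n n 𝕜} (hA : A.IsHermitian) :
    Fintype.card {i // hA.eigenvalues i = 0} = Module.finrank 𝕜 (LinearMap.ker A.mulVecLin) := by
  have h := LinearMap.finrank_range_add_finrank_ker A.mulVecLin
  rw [← rank, hA.rank_eq_card_non_zero_eigs, Fintype.card_subtype_compl,
    Module.finrank_fintype_fun_eq_card] at h
  have := Fintype.card_subtype_le (fun i => hA.eigenvalues i = 0)
  omega

theorem PosSemidef.exists_eigenvalue_eq_zero_and_pos_of_finrank_ker_eq_one {A : Matrix n n 𝕜}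
    (hA : A.PosSemidef) (hker : Module.finrank 𝕜 (LinearMap.ker A.mulVecLin) = 1) :
    ∃ i, hA.isHermitian.eigenvalues i = 0 ∧ ∀ j, j ≠ i → 0 < hA.isHermitian.eigenvalues j := by
  rw [← hA.isHermitian.card_eigenvalues_eq_zero, Fintype.card_eq_one_iff] at hker
  obtain ⟨⟨i, hi⟩, huniq⟩ := hker
  refine ⟨i, hi, fun j hj => (hA.eigenvalues_nonneg j).lt_of_ne fun hj0 => hj ?_⟩
  simpa using huniq ⟨j, hj0.symm⟩

end Matrix

/-- The Hessian of `f` at the unit equilateral triangle in the rescaled twist basis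
`(ṽ₁₂, ṽ₁₃, ṽ₂₃)`, divided by `3A/4`. -/
def lagrangeTwistMatrix (m₁ m₂ m₃ : ℝ) : Matrix (Fin 3) (Fin 3) ℝ :=
  !![m₃ / m₁ + m₃ / m₂, -1, -1;
     -1, m₂ / m₁ + m₂ / m₃, -1;
     -1, -1, m₁ / m₂ + m₁ / m₃]

section LagrangeTwistMatrix

open Matrix

variable {m₁ m₂ m₃ : ℝ}

theorem dotProduct_lagrangeTwistMatrix_mulVec (h₁ : m₁ ≠ 0) (h₂ : m₂ ≠ 0) (h₃ : m₃ ≠ 0)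
    (x : Fin 3 → ℝ) :
    x ⬝ᵥ lagrangeTwistMatrix m₁ m₂ m₃ *ᵥ x =
      (m₃ * x 0 - m₂ * x 1) ^ 2 / (m₂ * m₃) + (m₃ * x 0 - m₁ * x 2) ^ 2 / (m₁ * m₃) +
        (m₂ * x 1 - m₁ * x 2) ^ 2 / (m₁ * m₂) := by
  simp only [dotProduct, mulVec, lagrangeTwistMatrix, of_apply, cons_val', cons_val_fin_one,
    Fin.sum_univ_three, Fin.isValue, cons_val_zero, cons_val_one, Matrix.cons_val, neg_mul, one_mul]
  field_simp
  ring

theorem posSemidef_lagrangeTwistMatrix (h₁ : 0 < m₁) (h₂ : 0 < m₂) (h₃ : 0 < m₃) :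
    (lagrangeTwistMatrix m₁ m₂ m₃).PosSemidef := by
  refine .of_dotProduct_mulVec_nonneg (by ext i j; fin_cases i <;> fin_cases j <;> rfl) fun x => ?_
  rw [star_trivial, dotProduct_lagrangeTwistMatrix_mulVec h₁.ne' h₂.ne' h₃.ne']
  positivity

/-- The direction of simultaneous rotation of the three sides. -/
theorem lagrangeTwistMatrix_mulVec_rotation (h₁ : m₁ ≠ 0) (h₂ : m₂ ≠ 0) (h₃ : m₃ ≠ 0) :
    lagrangeTwistMatrix m₁ m₂ m₃ *ᵥ ![m₁ * m₂, m₁ * m₃, m₂ * m₃] = 0 := by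
  ext i
  fin_cases i <;>
    simp only [mulVec, dotProduct, lagrangeTwistMatrix, of_apply, cons_val', cons_val_fin_one,
      cons_val_zero, cons_val_one, Matrix.cons_val, Fin.sum_univ_three, Fin.isValue, Fin.zero_eta,
      Fin.mk_one, Fin.reduceFinMk, neg_mul, one_mul, Pi.zero_apply] <;>
    field_simp <;> ring

theorem ker_lagrangeTwistMatrix (h₁ : 0 < m₁) (h₂ : 0 < m₂) (h₃ : 0 < m₃) :
    LinearMap.ker (lagrangeTwistMatrix m₁ m₂ m₃).mulVecLin =
      ℝ ∙ ![m₁ * m₂, m₁ * m₃, m₂ * m₃] := by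
  refine le_antisymm (fun x hx => ?_) ?_
  · have hq : x ⬝ᵥ lagrangeTwistMatrix m₁ m₂ m₃ *ᵥ x = 0 := by
      rw [LinearMap.mem_ker, mulVecLin_apply] at hx
      rw [hx, dotProduct_zero]
    rw [dotProduct_lagrangeTwistMatrix_mulVec h₁.ne' h₂.ne' h₃.ne'] at hq
    have t₁ : 0 ≤ (m₃ * x 0 - m₂ * x 1) ^ 2 / (m₂ * m₃) := by positivity
    have t₂ : 0 ≤ (m₃ * x 0 - m₁ * x 2) ^ 2 / (m₁ * m₃) := by positivity
    have t₃ : 0 ≤ (m₂ * x 1 - m₁ * x 2) ^ 2 / (m₁ * m₂) := by positivity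
    obtain ⟨⟨e₁, e₂⟩, -⟩ := (add_eq_zero_iff_of_nonneg (add_nonneg t₁ t₂) t₃).mp hq
        |>.imp_left (add_eq_zero_iff_of_nonneg t₁ t₂).mp
    have h01 : m₃ * x 0 = m₂ * x 1 := by simpa [sub_eq_zero, h₁.ne', h₂.ne', h₃.ne'] using e₁
    have h02 : m₃ * x 0 = m₁ * x 2 := by simpa [sub_eq_zero, h₁.ne', h₃.ne'] using e₂
    refine Submodule.mem_span_singleton.mpr ⟨x 0 / (m₁ * m₂), ?_⟩
    ext i
    fin_cases i <;>
      simp only [Fin.isValue, Fin.zero_eta, Fin.mk_one, Fin.reduceFinMk, Pi.smul_apply,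
        cons_val_zero, cons_val_one, Matrix.cons_val, smul_eq_mul] <;>
      field_simp <;> linarith
  · rw [Submodule.span_le, Set.singleton_subset_iff, SetLike.mem_coe, LinearMap.mem_ker,
      mulVecLin_apply]
    exact lagrangeTwistMatrix_mulVec_rotation h₁.ne' h₂.ne' h₃.ne'

end LagrangeTwistMatrix

/-- For any positive masses `m₁, m₂, m₃` and any `A > 0`, the symmetric matrix
`(3A/4)·[[μ₃₁+μ₃₂, -1, -1], [-1, μ₂₁+μ₂₃, -1], [-1, -1, μ₁₂+μ₁₃]]` (with
`μ_{i,j} = m_i/m_j`) has exactly one zero eigenvalue and two strictly positive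
eigenvalues. -/
theorem equilateral_hessian_eigenvalues (A m₁ m₂ m₃ : ℝ) (hA : 0 < A)
    (h₁ : 0 < m₁) (h₂ : 0 < m₂) (h₃ : 0 < m₃) :
    ∃ hB : (((3 * A / 4) • !![m₃ / m₁ + m₃ / m₂, -1, -1;
                             -1, m₂ / m₁ + m₂ / m₃, -1;
                             -1, -1, m₁ / m₂ + m₁ / m₃]) :
              Matrix (Fin 3) (Fin 3) ℝ).IsHermitian,
      ∃ i : Fin 3, hB.eigenvalues i = 0 ∧ ∀ j : Fin 3, j ≠ i → 0 < hB.eigenvalues j := by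
  have hc : (0 : ℝ) < 3 * A / 4 := by positivity
  have hpsd : ((3 * A / 4) • lagrangeTwistMatrix m₁ m₂ m₃).PosSemidef :=
    (posSemidef_lagrangeTwistMatrix h₁ h₂ h₃).smul hc.le
  refine ⟨hpsd.isHermitian, hpsd.exists_eigenvalue_eq_zero_and_pos_of_finrank_ker_eq_one ?_⟩
  rw [Matrix.mulVecLin_smul, LinearMap.ker_smul _ _ hc.ne', ker_lagrangeTwistMatrix h₁ h₂ h₃]
  exact finrank_span_singleton (by simp [(mul_pos h₁ h₂).ne'])
end
end
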